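/- Let ∇ be a torsion-free affine connection on M and Σ an affine control system with observation space H. The observation space H^e of the gradient extension Σ^e on T*M equals V^{S_0} + (H + 𝔥)^v, where S_0 is the smallest linear space of vector fields containing g_1,…,g_m and closed under symmetric product with each g_i (i = 0,…,m), V^{S_0} = {V^X : X ∈ S_0}, and 𝔥 is spanned by L_{X_1}…L_{X_s} L_X V_j with X_r ∈ {g_0,…,g_m}, X ∈ S_0. -/

import Mathlib

open scoped BigOperators
noncomputable section

/-- Points of the coordinate model of an `n`-manifold. -/
abbrev Pt (n : ℕ) : Type := Fin n → ℝ
/-- Vector fields in coordinates. -/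
abbrev VF (n : ℕ) : Type := Pt n → Pt n
/-- Christoffel symbols `Γ x a b c = Γ^a_{bc}(x)` of an affine connection. -/
abbrev Chr (n : ℕ) : Type := Pt n → Fin n → Fin n → Fin n → ℝ

/-- Partial derivative `∂f/∂x^b` at `x`. -/
def pd {n : ℕ} (f : Pt n → ℝ) (b : Fin n) (x : Pt n) : ℝ :=
  fderiv ℝ f x (Pi.single b 1)

/-- Lie derivative of a function along a vector field, `X f`. -/
def dirDer {n : ℕ} (X : VF n) (f : Pt n → ℝ) : Pt n → ℝ :=
  fun x => ∑ b, X x b * pd f b x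

/-- Covariant derivative `∇_X Y` of the connection with Christoffel symbols `Γ`. -/
def nabla {n : ℕ} (Γ : Chr n) (X Y : VF n) : VF n :=
  fun x a => (∑ b, X x b * pd (fun y => Y y a) b x) + ∑ b, ∑ c, Γ x a b c * X x b * Y x c

/-- Symmetric product `⟨X : Y⟩ = ∇_X Y + ∇_Y X`. -/
def symProd {n : ℕ} (Γ : Chr n) (X Y : VF n) : VF n :=
  fun x a => nabla Γ X Y x a + nabla Γ Y X x a

/-- Lie bracket `[X, Y]` in coordinates. -/
def lieBr {n : ℕ} (X Y : VF n) : VF n :=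
  fun x a => (∑ b, X x b * pd (fun y => Y y a) b x) - ∑ b, Y x b * pd (fun y => X y a) b x

/-- Smoothness of a vector field (componentwise). -/
def SmoothVF {n : ℕ} (X : VF n) : Prop := ∀ a, ContDiff ℝ (⊤ : ℕ∞) (fun x => X x a)

/-- Torsion-free connection: Christoffel symbols symmetric in the lower indices. -/
def TorsionFree {n : ℕ} (Γ : Chr n) : Prop := ∀ x a b c, Γ x a b c = Γ x a c b

/-- Smoothness of the Christoffel symbols. -/
def SmoothChr {n : ℕ} (Γ : Chr n) : Prop := ∀ a b c, ContDiff ℝ (⊤ : ℕ∞) (fun x => Γ x a b c)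

/-- Iterated symmetric products `⟨X₁ : ⟨X₂ : ⟨… : ⟨Xₛ : g⟩…⟩⟩⟩`. -/
def symProdList {n : ℕ} (Γ : Chr n) (L : List (VF n)) (g : VF n) : VF n :=
  L.foldr (fun X acc => symProd Γ X acc) g

/-- Iterated Lie derivatives `L_{X₁} L_{X₂} … L_{Xₛ} V`. -/
def lieDerList {n : ℕ} (L : List (VF n)) (V : Pt n → ℝ) : Pt n → ℝ :=
  L.foldr (fun X acc => dirDer X acc) V

/-- A generating function `L_{g_{i₁}} … L_{g_{iₛ}} V_j` of the observation space,
indexed by the word `(i₁…iₛ, j)`. -/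
def obsFun {n m : ℕ} (gs : Fin (m+1) → VF n) (Vs : Fin m → (Pt n → ℝ))
    (w : List (Fin (m+1)) × Fin m) : Pt n → ℝ :=
  lieDerList (w.1.map gs) (Vs w.2)

/-- Observability: the observation space distinguishes points. -/
def Observable {n m : ℕ} (gs : Fin (m+1) → VF n) (Vs : Fin m → (Pt n → ℝ)) : Prop :=
  ∀ x1 x2 : Pt n, (∀ w, obsFun gs Vs w x1 = obsFun gs Vs w x2) → x1 = x2

/-- The codistribution `dH(x)` spanned by the differentials of the observation space. -/
def obsCodistrib {n m : ℕ} (gs : Fin (m+1) → VF n) (Vs : Fin m → (Pt n → ℝ))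
    (x : Pt n) : Submodule ℝ ((Fin n → ℝ) →L[ℝ] ℝ) :=
  Submodule.span ℝ (Set.range fun w => fderiv ℝ (obsFun gs Vs w) x)

/-- Constant rank of the observation codistribution. -/
def ConstantRankObs {n m : ℕ} (gs : Fin (m+1) → VF n) (Vs : Fin m → (Pt n → ℝ)) : Prop :=
  ∃ r : ℕ, ∀ x : Pt n, Module.finrank ℝ (obsCodistrib gs Vs x) = r

/-- Points of the (co)tangent bundle in coordinates: `(x, v)` resp. `(x, p)`. -/
abbrev TPt (n : ℕ) : Type := Pt n × Pt n

/-- Complete lift of a function to `TM`: `f^c(x,v) = ⟨df(x), v⟩`. -/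
def fc {n : ℕ} (f : Pt n → ℝ) : TPt n → ℝ := fun q => ∑ a, pd f a q.1 * q.2 a

/-- Vertical lift of a function to `TM` (or `T*M`): `f^v = f ∘ pr₁`. -/
def fvT {n : ℕ} (f : Pt n → ℝ) : TPt n → ℝ := fun q => f q.1

/-- Complete lift of a vector field to `TM` in coordinates. -/
def completeLift {n : ℕ} (X : VF n) : TPt n → TPt n :=
  fun q => (X q.1, fun a => ∑ b, pd (fun y => X y a) b q.1 * q.2 b)

/-- Vertical lift of a vector field to `TM`. -/
def verticalLift {n : ℕ} (X : VF n) : TPt n → TPt n := fun q => (0, X q.1)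

/-- Action of a vector field on the double space on a function. -/
def vfApply {n : ℕ} (Z : TPt n → TPt n) (F : TPt n → ℝ) : TPt n → ℝ :=
  fun q => fderiv ℝ F q (Z q)

/-- Momentum function `V^X(x,p) = ⟨p, X(x)⟩` on `T*M`. -/
def momF {n : ℕ} (X : VF n) : TPt n → ℝ := fun q => ∑ a, q.2 a * X q.1 a

/-- Partial derivative of a function on `T*M` in the `x^a` direction. -/
def pdX {n : ℕ} (F : TPt n → ℝ) (a : Fin n) (q : TPt n) : ℝ :=
  fderiv ℝ F q (Pi.single a 1, 0)

/-- Partial derivative of a function on `T*M` in the `p_a` direction. -/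
def pdP {n : ℕ} (F : TPt n → ℝ) (a : Fin n) (q : TPt n) : ℝ :=
  fderiv ℝ F q (0, Pi.single a 1)

/-- Gradient w.r.t. the Riemannian extension `G^c` of a torsion-free connection `Γ`,
computed with the inverse metric matrix `[[0, I], [I, 2 p_a Γ^a_{bc}]]`. -/
def gradGc {n : ℕ} (Γ : Chr n) (F : TPt n → ℝ) : TPt n → TPt n :=
  fun q => (fun a => pdP F a q,
    fun b => pdX F b q + 2 * ∑ a, ∑ c, q.2 a * Γ q.1 a b c * pdP F c q)

/-- The musical isomorphism `♭_G : TM → T*M`, `(x,v) ↦ (x, G(x)v)`. -/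
def flatG {n : ℕ} (G : Pt n → Matrix (Fin n) (Fin n) ℝ) : TPt n → TPt n :=
  fun q => (q.1, fun a => ∑ b, G q.1 a b * q.2 b)

/-- The Riemannian extension metric `G^c` on `T*M`, with matrix
`[[−2 p_c Γ^c_{ab}, I], [I, 0]]`, evaluated on two tangent vectors `u, w` at `q`. -/
def gcPair {n : ℕ} (Γ : Chr n) (q : TPt n) (u w : TPt n) : ℝ :=
  (∑ a, ∑ b, (-(2 * ∑ c, q.2 c * Γ q.1 c a b)) * u.1 a * w.1 b)
    + (∑ a, u.1 a * w.2 a) + ∑ a, u.2 a * w.1 a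

/-- The vector fields of the gradient extension `Σ^e` on `T*M`: the `G^c`-gradients of
the momentum functions `V^{g_i}` and of the vertical lifts `V_j^v`. -/
def gradExtVF {n m : ℕ} (Γ : Chr n) (gs : Fin (m+1) → VF n) (Vs : Fin m → (Pt n → ℝ)) :
    (Fin (m+1) ⊕ Fin m) → (TPt n → TPt n)
  | Sum.inl i => gradGc Γ (momF (gs i))
  | Sum.inr j => gradGc Γ (fvT (Vs j))

/-- The outputs of the gradient extension: `V_j^v` and `V^{g_j}`. -/
def gradExtOut {n m : ℕ} (gs : Fin (m+1) → VF n) (Vs : Fin m → (Pt n → ℝ)) :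
    (Fin m ⊕ Fin m) → (TPt n → ℝ)
  | Sum.inl j => fvT (Vs j)
  | Sum.inr j => momF (gs j.succ)

/-- Generating functions of the observation space `H^e` of the gradient extension. -/
def obsFunE {n m : ℕ} (Γ : Chr n) (gs : Fin (m+1) → VF n) (Vs : Fin m → (Pt n → ℝ))
    (w : List (Fin (m+1) ⊕ Fin m) × (Fin m ⊕ Fin m)) : TPt n → ℝ :=
  (w.1.map (gradExtVF Γ gs Vs)).foldr vfApply (gradExtOut gs Vs w.2)

/-- The observation codistribution `dH^e` of the gradient extension. -/
def obsCodistribE {n m : ℕ} (Γ : Chr n) (gs : Fin (m+1) → VF n) (Vs : Fin m → (Pt n → ℝ))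
    (q : TPt n) : Submodule ℝ (TPt n →L[ℝ] ℝ) :=
  Submodule.span ℝ (Set.range fun w => fderiv ℝ (obsFunE Γ gs Vs w) q)

/-- Generators of `S₀`: iterated symmetric products of the input vector fields by
elements of `{g_0,…,g_m}`. -/
def s0Gen {n m : ℕ} (Γ : Chr n) (gs : Fin (m+1) → VF n)
    (p : List (Fin (m+1)) × Fin m) : VF n :=
  symProdList Γ (p.1.map gs) (gs p.2.succ)

/-- Full-rankness of the distribution `S₀` generated by `S₀`. -/
def S0FullRank {n m : ℕ} (Γ : Chr n) (gs : Fin (m+1) → VF n) : Prop :=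
  ∀ x : Pt n, Submodule.span ℝ {v : Fin n → ℝ |
    ∃ p : List (Fin (m+1)) × Fin m, v = s0Gen Γ gs p x} = ⊤


section Aux

open Finset

variable {n m : ℕ}

-- ### fderiv expansion along the basis of `TPt n`

lemma fderiv_eval (F : TPt n → ℝ) (q : TPt n) (v : TPt n) :
    fderiv ℝ F q v = (∑ b, v.1 b * pdX F b q) + ∑ b, v.2 b * pdP F b q := by
  have hv : v = (∑ b, v.1 b • (((Pi.single b 1 : Pt n), (0 : Pt n)) : TPt n))
      + ∑ b, v.2 b • (((0 : Pt n), (Pi.single b 1 : Pt n)) : TPt n) := by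
    ext a
    · simp [Prod.fst_sum, Finset.sum_apply, Pi.single_apply, Finset.sum_ite_eq']
    · simp [Prod.snd_sum, Finset.sum_apply, Pi.single_apply, Finset.sum_ite_eq']
  conv_lhs => rw [hv]
  rw [map_add, map_sum, map_sum]
  simp only [map_smul, smul_eq_mul, pdX, pdP]

-- ### derivatives of `momF` and `fvT`

lemma momF_hasFDerivAt (X : VF n) (hX : SmoothVF X) (q : TPt n) :
    HasFDerivAt (momF X)
      (∑ a, (q.2 a • ((fderiv ℝ (fun y => X y a) q.1).comp (ContinuousLinearMap.fst ℝ (Pt n) (Pt n)))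
        + X q.1 a • ((ContinuousLinearMap.proj a).comp (ContinuousLinearMap.snd ℝ (Pt n) (Pt n))))) q := by
  unfold momF
  apply HasFDerivAt.fun_sum
  intro a _
  have h1 : HasFDerivAt (fun q : TPt n => q.2 a)
      ((ContinuousLinearMap.proj a).comp (ContinuousLinearMap.snd ℝ (Pt n) (Pt n))) q :=
    ((ContinuousLinearMap.proj a).comp (ContinuousLinearMap.snd ℝ (Pt n) (Pt n))).hasFDerivAt
  have h2 : HasFDerivAt (fun q : TPt n => X q.1 a)
      ((fderiv ℝ (fun y => X y a) q.1).comp (ContinuousLinearMap.fst ℝ (Pt n) (Pt n))) q :=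
    (((hX a).differentiable (by simp) q.1).hasFDerivAt).comp q
      ((ContinuousLinearMap.fst ℝ (Pt n) (Pt n)).hasFDerivAt)
  exact h1.mul h2

lemma pdX_momF (X : VF n) (hX : SmoothVF X) (b : Fin n) (q : TPt n) :
    pdX (momF X) b q = ∑ a, q.2 a * pd (fun y => X y a) b q.1 := by
  rw [pdX, (momF_hasFDerivAt X hX q).fderiv]
  simp [pd]

lemma pdP_momF (X : VF n) (hX : SmoothVF X) (b : Fin n) (q : TPt n) :
    pdP (momF X) b q = X q.1 b := by
  rw [pdP, (momF_hasFDerivAt X hX q).fderiv]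
  simp [Pi.single_apply, Finset.sum_ite_eq']

lemma fvT_hasFDerivAt (f : Pt n → ℝ) (hf : Differentiable ℝ f) (q : TPt n) :
    HasFDerivAt (fvT f) ((fderiv ℝ f q.1).comp (ContinuousLinearMap.fst ℝ (Pt n) (Pt n))) q :=
  ((hf q.1).hasFDerivAt).comp q ((ContinuousLinearMap.fst ℝ (Pt n) (Pt n)).hasFDerivAt)

lemma pdX_fvT (f : Pt n → ℝ) (hf : Differentiable ℝ f) (b : Fin n) (q : TPt n) :
    pdX (fvT f) b q = pd f b q.1 := by
  rw [pdX, (fvT_hasFDerivAt f hf q).fderiv]; simp [pd]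

lemma pdP_fvT (f : Pt n → ℝ) (hf : Differentiable ℝ f) (b : Fin n) (q : TPt n) :
    pdP (fvT f) b q = 0 := by
  rw [pdP, (fvT_hasFDerivAt f hf q).fderiv]; simp

-- ### smoothness lemmas

lemma smooth_pd {f : Pt n → ℝ} (hf : ContDiff ℝ (⊤ : ℕ∞) f) (b : Fin n) :
    ContDiff ℝ (⊤ : ℕ∞) (fun x => pd f b x) :=
  (hf.fderiv_right (by simp)).clm_apply contDiff_const

lemma smooth_dirDer {X : VF n} {f : Pt n → ℝ} (hX : SmoothVF X)
    (hf : ContDiff ℝ (⊤ : ℕ∞) f) : ContDiff ℝ (⊤ : ℕ∞) (dirDer X f) := by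
  unfold dirDer
  exact ContDiff.sum (fun b _ => (hX b).mul (smooth_pd hf b))

lemma smooth_symProd {Γ : Chr n} {X Y : VF n} (hΓ : SmoothChr Γ)
    (hX : SmoothVF X) (hY : SmoothVF Y) : SmoothVF (symProd Γ X Y) := by
  intro a
  unfold symProd nabla
  apply ContDiff.add <;> apply ContDiff.add
  · exact ContDiff.sum (fun b _ => (hX b).mul (smooth_pd (hY a) b))
  · exact ContDiff.sum fun b _ => ContDiff.sum fun c _ => ((hΓ a b c).mul (hX b)).mul (hY c)
  · exact ContDiff.sum (fun b _ => (hY b).mul (smooth_pd (hX a) b))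
  · exact ContDiff.sum fun b _ => ContDiff.sum fun c _ => ((hΓ a b c).mul (hY b)).mul (hX c)

lemma smooth_symProdList {Γ : Chr n} (hΓ : SmoothChr Γ) (L : List (VF n))
    (hL : ∀ X ∈ L, SmoothVF X) {g : VF n} (hg : SmoothVF g) :
    SmoothVF (symProdList Γ L g) := by
  induction L with
  | nil => exact hg
  | cons X L ih =>
      exact smooth_symProd hΓ (hL X List.mem_cons_self)
        (ih fun Y hY => hL Y (List.mem_cons_of_mem X hY))

lemma smooth_lieDerList (L : List (VF n)) (hL : ∀ X ∈ L, SmoothVF X)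
    {V : Pt n → ℝ} (hV : ContDiff ℝ (⊤ : ℕ∞) V) : ContDiff ℝ (⊤ : ℕ∞) (lieDerList L V) := by
  induction L with
  | nil => exact hV
  | cons X L ih =>
      exact smooth_dirDer (hL X List.mem_cons_self)
        (ih fun Y hY => hL Y (List.mem_cons_of_mem X hY))

lemma smooth_s0Gen {Γ : Chr n} (hΓ : SmoothChr Γ) {gs : Fin (m+1) → VF n}
    (hgs : ∀ i, SmoothVF (gs i)) (p : List (Fin (m+1)) × Fin m) :
    SmoothVF (s0Gen Γ gs p) := by
  apply smooth_symProdList hΓ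
  · intro X hX
    rcases List.mem_map.mp hX with ⟨i, _, rfl⟩
    exact hgs i
  · exact hgs _

lemma smooth_obsFun {gs : Fin (m+1) → VF n} {Vs : Fin m → (Pt n → ℝ)}
    (hgs : ∀ i, SmoothVF (gs i)) (hVs : ∀ j, ContDiff ℝ (⊤ : ℕ∞) (Vs j))
    (w : List (Fin (m+1)) × Fin m) : ContDiff ℝ (⊤ : ℕ∞) (obsFun gs Vs w) := by
  apply smooth_lieDerList
  · intro X hX
    rcases List.mem_map.mp hX with ⟨i, _, rfl⟩
    exact hgs i
  · exact hVs _

-- ### the algebraic key identity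

lemma key_sum (p X Y : Fin n → ℝ) (dX dY : Fin n → Fin n → ℝ)
    (G : Fin n → Fin n → Fin n → ℝ) (hG : ∀ a b c, G a b c = G a c b) :
    ((∑ b, X b * (∑ a, p a * dY a b))
      + ∑ b, ((∑ a, p a * dX a b) + 2 * ∑ a, ∑ c, p a * G a b c * X c) * Y b)
    = ∑ a, p a * ((((∑ b, X b * dY a b) + ∑ b, ∑ c, G a b c * X b * Y c)
        + ((∑ b, Y b * dX a b) + ∑ b, ∑ c, G a b c * Y b * X c))) := by
  have e1 : (∑ b, X b * (∑ a, p a * dY a b)) = ∑ a, p a * ∑ b, X b * dY a b := by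
    simp only [Finset.mul_sum]
    rw [Finset.sum_comm]
    exact Finset.sum_congr rfl fun a _ => Finset.sum_congr rfl fun b _ => by ring
  have e2 : (∑ b, (∑ a, p a * dX a b) * Y b) = ∑ a, p a * ∑ b, Y b * dX a b := by
    simp only [Finset.sum_mul, Finset.mul_sum]
    rw [Finset.sum_comm]
    exact Finset.sum_congr rfl fun a _ => Finset.sum_congr rfl fun b _ => by ring
  have e3 : (∑ b, (2 * ∑ a, ∑ c, p a * G a b c * X c) * Y b)
      = (∑ a, p a * ∑ b, ∑ c, G a b c * X b * Y c)
        + ∑ a, p a * ∑ b, ∑ c, G a b c * Y b * X c := by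
    have h2 : ∀ a, (∑ b, ∑ c, G a b c * X b * Y c) = ∑ b, ∑ c, G a b c * X c * Y b := by
      intro a
      rw [show (∑ b, ∑ c, G a b c * X b * Y c) = ∑ c, ∑ b, G a b c * X b * Y c from
        Finset.sum_comm]
      exact Finset.sum_congr rfl fun c _ => Finset.sum_congr rfl fun b _ => by rw [hG a b c]
    have h4 : ∀ a, (∑ b, ∑ c, G a b c * Y b * X c) = ∑ b, ∑ c, G a b c * X c * Y b :=
      fun a => Finset.sum_congr rfl fun b _ => Finset.sum_congr rfl fun c _ => by ring
    simp only [h2, h4, ← Finset.sum_add_distrib, Finset.mul_sum, Finset.sum_mul]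
    rw [Finset.sum_comm]
    exact Finset.sum_congr rfl fun a _ => Finset.sum_congr rfl fun b _ =>
      Finset.sum_congr rfl fun c _ => by ring
  calc ((∑ b, X b * (∑ a, p a * dY a b))
      + ∑ b, ((∑ a, p a * dX a b) + 2 * ∑ a, ∑ c, p a * G a b c * X c) * Y b)
      = (∑ b, X b * (∑ a, p a * dY a b))
        + ((∑ b, (∑ a, p a * dX a b) * Y b)
          + ∑ b, (2 * ∑ a, ∑ c, p a * G a b c * X c) * Y b) := by
        simp only [add_mul, Finset.sum_add_distrib]
    _ = _ := by
        rw [e1, e2, e3]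
        simp only [mul_add, ← Finset.sum_add_distrib]
        refine Finset.sum_congr rfl fun a _ => by
          simp only [Finset.mul_sum, mul_add, Finset.sum_add_distrib]
          ring

-- ### the four structure computations

lemma vfA_mm {Γ : Chr n} (hΓ : TorsionFree Γ) {X Y : VF n}
    (hX : SmoothVF X) (hY : SmoothVF Y) :
    vfApply (gradGc Γ (momF X)) (momF Y) = momF (symProd Γ X Y) := by
  funext q
  rw [vfApply, fderiv_eval]
  simp only [gradGc, pdX_momF X hX, pdP_momF X hX, pdX_momF Y hY, pdP_momF Y hY]
  rw [show momF (symProd Γ X Y) q = ∑ a, q.2 a *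
      ((((∑ b, X q.1 b * pd (fun y => Y y a) b q.1)
          + ∑ b, ∑ c, Γ q.1 a b c * X q.1 b * Y q.1 c)
        + ((∑ b, Y q.1 b * pd (fun y => X y a) b q.1)
          + ∑ b, ∑ c, Γ q.1 a b c * Y q.1 b * X q.1 c))) from by
    simp only [momF, symProd, nabla]]
  exact key_sum q.2 (X q.1) (Y q.1) (fun a b => pd (fun y => X y a) b q.1)
    (fun a b => pd (fun y => Y y a) b q.1) (fun a b c => Γ q.1 a b c)
    (fun a b c => hΓ q.1 a b c)

lemma vfA_mf {Γ : Chr n} {X : VF n} (hX : SmoothVF X) {f : Pt n → ℝ}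
    (hf : ContDiff ℝ (⊤ : ℕ∞) f) :
    vfApply (gradGc Γ (momF X)) (fvT f) = fvT (dirDer X f) := by
  funext q
  rw [vfApply, fderiv_eval]
  simp only [gradGc, pdX_fvT f (hf.differentiable (by simp)), pdP_fvT f (hf.differentiable (by simp)),
    pdP_momF X hX, mul_zero, Finset.sum_const_zero, add_zero]
  rfl

lemma vfA_fm {Γ : Chr n} {Y : VF n} (hY : SmoothVF Y) {f : Pt n → ℝ}
    (hf : ContDiff ℝ (⊤ : ℕ∞) f) :
    vfApply (gradGc Γ (fvT f)) (momF Y) = fvT (dirDer Y f) := by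
  funext q
  rw [vfApply, fderiv_eval]
  simp only [gradGc, pdX_fvT f (hf.differentiable (by simp)), pdP_fvT f (hf.differentiable (by simp)),
    pdP_momF Y hY, mul_zero, zero_mul, Finset.sum_const_zero, add_zero, zero_add]
  rw [show fvT (dirDer Y f) q = ∑ b, Y q.1 b * pd f b q.1 from rfl]
  exact Finset.sum_congr rfl fun b _ => by ring

lemma vfA_ff {Γ : Chr n} {f g : Pt n → ℝ} (hf : ContDiff ℝ (⊤ : ℕ∞) f) (hg : ContDiff ℝ (⊤ : ℕ∞) g) :
    vfApply (gradGc Γ (fvT f)) (fvT g) = 0 := by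
  funext q
  rw [vfApply, fderiv_eval]
  simp [gradGc, pdP_fvT f (hf.differentiable (by simp)), pdP_fvT g (hg.differentiable (by simp))]

lemma vfA_zero (Z : TPt n → TPt n) : vfApply Z (0 : TPt n → ℝ) = 0 := by
  funext q
  have : fderiv ℝ (0 : TPt n → ℝ) q = 0 := fderiv_const_apply 0
  simp [vfApply, this]

-- ### unfolding obsFunE

lemma obsFunE_cons {Γ : Chr n} (gs : Fin (m+1) → VF n) (Vs : Fin m → (Pt n → ℝ))
    (z : Fin (m+1) ⊕ Fin m) (L : List (Fin (m+1) ⊕ Fin m)) (o : Fin m ⊕ Fin m) :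
    obsFunE Γ gs Vs (z :: L, o)
      = vfApply (gradExtVF Γ gs Vs z) (obsFunE Γ gs Vs (L, o)) := rfl

-- ### classification of obsFunE

lemma obsFunE_cases {Γ : Chr n} {gs : Fin (m+1) → VF n} {Vs : Fin m → (Pt n → ℝ)}
    (hΓ : TorsionFree Γ) (hΓs : SmoothChr Γ)
    (hgs : ∀ i, SmoothVF (gs i)) (hVs : ∀ j, ContDiff ℝ (⊤ : ℕ∞) (Vs j))
    (L : List (Fin (m+1) ⊕ Fin m)) (o : Fin m ⊕ Fin m) :
    (∃ p, obsFunE Γ gs Vs (L, o) = momF (s0Gen Γ gs p)) ∨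
    (∃ w, obsFunE Γ gs Vs (L, o) = fvT (obsFun gs Vs w)) ∨
    (∃ t : List (Fin (m+1)) × (List (Fin (m+1)) × Fin m) × Fin m,
      obsFunE Γ gs Vs (L, o)
        = fvT (lieDerList (t.1.map gs) (dirDer (s0Gen Γ gs t.2.1) (Vs t.2.2)))) ∨
    obsFunE Γ gs Vs (L, o) = 0 := by
  induction L with
  | nil =>
      cases o with
      | inl j => exact Or.inr (Or.inl ⟨([], j), rfl⟩)
      | inr j => exact Or.inl ⟨([], j), rfl⟩
  | cons z L ih =>
      rcases ih with ⟨p, hp⟩ | ⟨w, hw⟩ | ⟨t, ht⟩ | h0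
      · cases z with
        | inl i =>
            refine Or.inl ⟨(i :: p.1, p.2), ?_⟩
            rw [obsFunE_cons, hp]
            exact vfA_mm hΓ (hgs i) (smooth_s0Gen hΓs hgs p)
        | inr k =>
            refine Or.inr (Or.inr (Or.inl ⟨([], p, k), ?_⟩))
            rw [obsFunE_cons, hp]
            exact vfA_fm (smooth_s0Gen hΓs hgs p) (hVs k)
      · cases z with
        | inl i =>
            refine Or.inr (Or.inl ⟨(i :: w.1, w.2), ?_⟩)
            rw [obsFunE_cons, hw]
            exact vfA_mf (hgs i) (smooth_obsFun hgs hVs w)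
        | inr k =>
            refine Or.inr (Or.inr (Or.inr ?_))
            rw [obsFunE_cons, hw]
            exact vfA_ff (hVs k) (smooth_obsFun hgs hVs w)
      · have hsm : ContDiff ℝ (⊤ : ℕ∞) (lieDerList (t.1.map gs) (dirDer (s0Gen Γ gs t.2.1) (Vs t.2.2))) := by
          apply smooth_lieDerList
          · intro X hX
            rcases List.mem_map.mp hX with ⟨i, _, rfl⟩
            exact hgs i
          · exact smooth_dirDer (smooth_s0Gen hΓs hgs t.2.1) (hVs t.2.2)
        cases z with
        | inl i =>
            refine Or.inr (Or.inr (Or.inl ⟨(i :: t.1, t.2), ?_⟩))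
            rw [obsFunE_cons, ht]
            exact vfA_mf (hgs i) hsm
        | inr k =>
            refine Or.inr (Or.inr (Or.inr ?_))
            rw [obsFunE_cons, ht]
            exact vfA_ff (hVs k) hsm
      · refine Or.inr (Or.inr (Or.inr ?_))
        rw [obsFunE_cons, h0]
        exact vfA_zero _

-- ### every generator of the RHS is an obsFunE

lemma obsFunE_eq_mom {Γ : Chr n} {gs : Fin (m+1) → VF n} {Vs : Fin m → (Pt n → ℝ)}
    (hΓ : TorsionFree Γ) (hΓs : SmoothChr Γ) (hgs : ∀ i, SmoothVF (gs i))
    (L : List (Fin (m+1))) (j : Fin m) :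
    obsFunE Γ gs Vs (L.map Sum.inl, Sum.inr j) = momF (s0Gen Γ gs (L, j)) := by
  induction L with
  | nil => rfl
  | cons i L ih =>
      rw [List.map_cons, obsFunE_cons, ih]
      exact vfA_mm hΓ (hgs i) (smooth_s0Gen hΓs hgs (L, j))

lemma obsFunE_eq_obs {Γ : Chr n} {gs : Fin (m+1) → VF n} {Vs : Fin m → (Pt n → ℝ)}
    (hgs : ∀ i, SmoothVF (gs i)) (hVs : ∀ j, ContDiff ℝ (⊤ : ℕ∞) (Vs j))
    (L : List (Fin (m+1))) (j : Fin m) :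
    obsFunE Γ gs Vs (L.map Sum.inl, Sum.inl j) = fvT (obsFun gs Vs (L, j)) := by
  induction L with
  | nil => rfl
  | cons i L ih =>
      rw [List.map_cons, obsFunE_cons, ih]
      exact vfA_mf (hgs i) (smooth_obsFun hgs hVs (L, j))

lemma obsFunE_eq_mixed {Γ : Chr n} {gs : Fin (m+1) → VF n} {Vs : Fin m → (Pt n → ℝ)}
    (hΓ : TorsionFree Γ) (hΓs : SmoothChr Γ) (hgs : ∀ i, SmoothVF (gs i))
    (hVs : ∀ j, ContDiff ℝ (⊤ : ℕ∞) (Vs j))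
    (A : List (Fin (m+1))) (p : List (Fin (m+1)) × Fin m) (k : Fin m) :
    obsFunE Γ gs Vs (A.map Sum.inl ++ Sum.inr k :: p.1.map Sum.inl, Sum.inr p.2)
      = fvT (lieDerList (A.map gs) (dirDer (s0Gen Γ gs p) (Vs k))) := by
  induction A with
  | nil =>
      rw [List.map_nil, List.nil_append, obsFunE_cons, obsFunE_eq_mom hΓ hΓs hgs p.1 p.2]
      exact vfA_fm (smooth_s0Gen hΓs hgs p) (hVs k)
  | cons i A ih =>
      rw [List.map_cons, List.cons_append, obsFunE_cons, ih, List.map_cons]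
      have hsm : ContDiff ℝ (⊤ : ℕ∞) (lieDerList (A.map gs) (dirDer (s0Gen Γ gs p) (Vs k))) := by
        apply smooth_lieDerList
        · intro X hX
          rcases List.mem_map.mp hX with ⟨i', _, rfl⟩
          exact hgs i'
        · exact smooth_dirDer (smooth_s0Gen hΓs hgs p) (hVs k)
      exact vfA_mf (hgs i) hsm

end Aux

/-- The observation space of the gradient extension is `H^e = V^{S₀} + (H + 𝔥)^v`, where
`𝔥` is spanned by the `L_{X₁}…L_{Xₛ} L_X V_j` with `X ∈ S₀`. -/
theorem gradient_extension_observation_space {n m : ℕ} (Γ : Chr n)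
    (gs : Fin (m+1) → VF n) (Vs : Fin m → (Pt n → ℝ))
    (hΓ : TorsionFree Γ) (hΓs : SmoothChr Γ)
    (hgs : ∀ i, SmoothVF (gs i)) (hVs : ∀ j, ContDiff ℝ (⊤ : ℕ∞) (Vs j)) :
    Submodule.span ℝ (Set.range (obsFunE Γ gs Vs))
      = Submodule.span ℝ
          ((Set.range fun p : List (Fin (m+1)) × Fin m => momF (s0Gen Γ gs p))
            ∪ (Set.range fun w => fvT (obsFun gs Vs w))
            ∪ (Set.range fun t : List (Fin (m+1)) × (List (Fin (m+1)) × Fin m) × Fin m =>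
                fvT (lieDerList (t.1.map gs) (dirDer (s0Gen Γ gs t.2.1) (Vs t.2.2)))))  := by
  apply le_antisymm
  · rw [Submodule.span_le]
    rintro F ⟨w, rfl⟩
    obtain ⟨L, o⟩ := w
    rcases obsFunE_cases hΓ hΓs hgs hVs L o with ⟨p, hp⟩ | ⟨w, hw⟩ | ⟨t, ht⟩ | h0
    · rw [hp]
      exact Submodule.subset_span (Or.inl (Or.inl ⟨p, rfl⟩))
    · rw [hw]
      exact Submodule.subset_span (Or.inl (Or.inr ⟨w, rfl⟩))
    · rw [ht]
      exact Submodule.subset_span (Or.inr ⟨t, rfl⟩)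
    · rw [h0]
      exact Submodule.zero_mem _
  · rw [Submodule.span_le]
    rintro F ((⟨p, rfl⟩ | ⟨w, rfl⟩) | ⟨t, rfl⟩)
    · exact Submodule.subset_span
        ⟨(p.1.map Sum.inl, Sum.inr p.2), obsFunE_eq_mom hΓ hΓs hgs p.1 p.2⟩
    · exact Submodule.subset_span
        ⟨(w.1.map Sum.inl, Sum.inl w.2), obsFunE_eq_obs hgs hVs w.1 w.2⟩
    · exact Submodule.subset_span
        ⟨(t.1.map Sum.inl ++ Sum.inr t.2.2 :: t.2.1.1.map Sum.inl, Sum.inr t.2.1.2),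
          obsFunE_eq_mixed hΓ hΓs hgs hVs t.1 t.2.1 t.2.2⟩
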